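/- arXiv:2311.12497 — 2 statements merged into one kernel-verified Lean document; each statement's English description precedes it below -/
import Mathlib

section
/- For the SDIRK2 scheme with Butcher matrix A = [[1 − √2/2, 0], [√2/2, 1 − √2/2]] and weights b = (√2/2, 1 − √2/2), the matrix Q = BA⁻¹ + A⁻ᵀB − A⁻ᵀbbᵀA⁻¹ (with B = diag(b)) is NOT positive semidefinite; i.e., there exists a vector x ∈ ℝ² with xᵀQx < 0. -/
open Matrix

/-- The SDIRK2 scheme's matrix Q is not positive semidefinite. -/
theorem sdirk2_Q_not_psd :
    let A : Matrix (Fin 2) (Fin 2) ℝ :=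
      !![1 - Real.sqrt 2 / 2, 0; Real.sqrt 2 / 2, 1 - Real.sqrt 2 / 2]
    let b : Fin 2 → ℝ := ![Real.sqrt 2 / 2, 1 - Real.sqrt 2 / 2]
    let B : Matrix (Fin 2) (Fin 2) ℝ := Matrix.diagonal b
    let Q : Matrix (Fin 2) (Fin 2) ℝ :=
      B * A⁻¹ + (A⁻¹)ᵀ * B - (A⁻¹)ᵀ * Matrix.vecMulVec b b * A⁻¹
    ∃ x : Fin 2 → ℝ, x ⬝ᵥ Q.mulVec x < 0 := by
  intro A b B Q
  have hs : Real.sqrt 2 ^ 2 = 2 := Real.sq_sqrt (by norm_num)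
  have hs1 : (1:ℝ) < Real.sqrt 2 := by
    nlinarith [Real.sqrt_nonneg 2]
  have hs2 : Real.sqrt 2 < 2 := by
    nlinarith [Real.sqrt_nonneg 2]
  have hinv : A⁻¹ = !![2 + Real.sqrt 2, 0; -(4 + 3 * Real.sqrt 2), 2 + Real.sqrt 2] := by
    apply Matrix.inv_eq_right_inv
    ext i j
    fin_cases i <;> fin_cases j <;>
      simp [A, Matrix.mul_apply, Fin.sum_univ_two, Matrix.one_apply] <;> nlinarith
  refine ⟨![1, 2], ?_⟩
  have : (![1, 2] : Fin 2 → ℝ) ⬝ᵥ Q.mulVec ![1, 2] = 2 - 2 * Real.sqrt 2 := by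
    simp only [Q, B, b, hinv, dotProduct, Matrix.mulVec, Matrix.mul_apply,
      Matrix.sub_apply, Matrix.add_apply, Matrix.transpose_apply, Matrix.vecMulVec_apply,
      Matrix.diagonal_apply, Fin.sum_univ_two]
    norm_num [Matrix.cons_val_zero, Matrix.cons_val_one]
    ring_nf
    nlinarith
  rw [this]
  nlinarith
end

section
/- Consider one step of an s-stage Runge–Kutta method with invertible coefficient matrix A ∈ ℝ^{s×s} and weights b applied to the linear system U' = LU: the stages satisfy U^{(k)} = Uⁿ + Δt Σ_j A_{kj} L U^{(j)} and U^{n+1} = Uⁿ + Δt Σ_k b_k L U^{(k)}. Then ½‖U^{n+1}‖² − ½‖Uⁿ‖² = −½ ΔUᵀ(Q ⊗ I)ΔU + Δt Σ_k b_k ⟨U^{(k)}, ½(L + Lᵀ)U^{(k)}⟩, where ΔU stacks the stage increments U^{(k)} − Uⁿ and Q = BA⁻¹ + A⁻ᵀB − A⁻ᵀbbᵀA⁻¹ with B = diag(b). -/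
open Matrix

open Kronecker

private theorem quadKron {s n : ℕ} (M : Matrix (Fin s) (Fin s) ℝ) (v : Fin s × Fin n → ℝ) :
    v ⬝ᵥ (M ⊗ₖ (1 : Matrix (Fin n) (Fin n) ℝ)).mulVec v
    = ∑ k, ∑ j, M k j * ((fun i => v (k,i)) ⬝ᵥ (fun i => v (j,i))) := by
  simp only [dotProduct, Matrix.mulVec, Matrix.kroneckerMap_apply, Matrix.one_apply,
    Fintype.sum_prod_type, Finset.mul_sum, Finset.sum_mul, mul_ite, ite_mul, mul_one, mul_zero,
    zero_mul, Finset.sum_ite_eq, Finset.sum_ite_eq', Finset.mem_univ, if_true]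
  refine Finset.sum_congr rfl fun k _ => ?_
  rw [Finset.sum_comm]
  refine Finset.sum_congr rfl fun j _ => Finset.sum_congr rfl fun i _ => by ring

private theorem dot_sum_smul {n s : ℕ} (u : Fin n → ℝ) (x : Fin s → ℝ) (f : Fin s → Fin n → ℝ) :
    u ⬝ᵥ (∑ j, x j • f j) = ∑ j, x j * (u ⬝ᵥ f j) := by
  simp only [dotProduct, Finset.sum_apply, Pi.smul_apply, smul_eq_mul, Finset.mul_sum]
  rw [Finset.sum_comm]
  exact Finset.sum_congr rfl fun j _ => Finset.sum_congr rfl fun i _ => by ring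

private theorem sum_smul_dot {n s : ℕ} (u : Fin n → ℝ) (x : Fin s → ℝ) (f : Fin s → Fin n → ℝ) :
    (∑ j, x j • f j) ⬝ᵥ u = ∑ j, x j * (f j ⬝ᵥ u) := by
  rw [dotProduct_comm, dot_sum_smul]
  exact Finset.sum_congr rfl fun j _ => by rw [dotProduct_comm]

private theorem symmDot {n : ℕ} (L : Matrix (Fin n) (Fin n) ℝ) (u : Fin n → ℝ) :
    u ⬝ᵥ ((1 / 2 : ℝ) • (L + Lᵀ)).mulVec u = u ⬝ᵥ L.mulVec u := by
  have h : u ⬝ᵥ Lᵀ.mulVec u = u ⬝ᵥ L.mulVec u := by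
    rw [Matrix.mulVec_transpose, dotProduct_comm, ← Matrix.dotProduct_mulVec]
  rw [Matrix.smul_mulVec, Matrix.add_mulVec, dotProduct_smul, dotProduct_add, h,
    smul_eq_mul]
  ring

/-- Fully discrete energy evolution equation (32) for a Runge–Kutta step on U' = LU. -/
theorem rk_energy_evolution {s n : ℕ} (A : Matrix (Fin s) (Fin s) ℝ)
    (hA : IsUnit A.det) (b : Fin s → ℝ) (L : Matrix (Fin n) (Fin n) ℝ)
    (Δt : ℝ) (Un Un1 : Fin n → ℝ) (Ustage : Fin s → (Fin n → ℝ))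
    (hstage : ∀ k, Ustage k
      = Un + Δt • ∑ j, A k j • L.mulVec (Ustage j))
    (hstep : Un1 = Un + Δt • ∑ k, b k • L.mulVec (Ustage k)) :
    let B : Matrix (Fin s) (Fin s) ℝ := Matrix.diagonal b
    let Q : Matrix (Fin s) (Fin s) ℝ :=
      B * A⁻¹ + (A⁻¹)ᵀ * B - (A⁻¹)ᵀ * Matrix.vecMulVec b b * A⁻¹
    let ΔU : Fin s × Fin n → ℝ := fun p => Ustage p.1 p.2 - Un p.2
    (1 / 2 : ℝ) * (Un1 ⬝ᵥ Un1) - (1 / 2 : ℝ) * (Un ⬝ᵥ Un)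
      = -(1 / 2 : ℝ) * (ΔU ⬝ᵥ (Q ⊗ₖ (1 : Matrix (Fin n) (Fin n) ℝ)).mulVec ΔU)
        + Δt * ∑ k, b k *
            (Ustage k ⬝ᵥ ((1 / 2 : ℝ) • (L + Lᵀ)).mulVec (Ustage k)) := by
  intro B Q ΔU
  have hA1 : A⁻¹ * A = 1 := Matrix.nonsing_inv_mul A hA
  set D : Fin s → (Fin n → ℝ) := fun k => fun i => Ustage k i - Un i with hDdef
  set w : Fin s → (Fin n → ℝ) := fun k => Δt • L.mulVec (Ustage k) with hwdef
  -- D in terms of w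
  have hD : ∀ k, D k = ∑ j, A k j • w j := by
    intro k
    funext i
    have h := hstage k
    simp only [hDdef, hwdef, Finset.sum_apply, Pi.smul_apply, smul_eq_mul]
    rw [h]
    simp only [Pi.add_apply, Pi.smul_apply, Finset.sum_apply, smul_eq_mul,
      add_sub_cancel_left]
    rw [Finset.mul_sum]
    exact Finset.sum_congr rfl fun j _ => by ring
  -- w in terms of D
  have hw : ∀ k, w k = ∑ j, A⁻¹ k j • D j := by
    intro k
    symm
    calc ∑ j, A⁻¹ k j • D j = ∑ j, ∑ m, (A⁻¹ k j * A j m) • w m := by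
          refine Finset.sum_congr rfl fun j _ => ?_
          rw [hD j, Finset.smul_sum]
          exact Finset.sum_congr rfl fun m _ => by rw [smul_smul]
      _ = ∑ m, (∑ j, A⁻¹ k j * A j m) • w m := by
          rw [Finset.sum_comm]
          exact Finset.sum_congr rfl fun m _ => (Finset.sum_smul).symm
      _ = w k := by
          have h1 : ∀ m, (∑ j, A⁻¹ k j * A j m) = (1 : Matrix (Fin s) (Fin s) ℝ) k m := by
            intro m; rw [← hA1]; simp [Matrix.mul_apply]
          simp only [h1, Matrix.one_apply, ite_smul, one_smul, zero_smul]
          simp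
  set S : Fin n → ℝ := ∑ k, b k • w k with hSdef
  set T : ℝ := ∑ k, b k * (D k ⬝ᵥ w k) with hTdef
  -- dot products D k ⬝ᵥ w k
  have hdot : ∀ k, D k ⬝ᵥ w k = ∑ j, A⁻¹ k j * (D k ⬝ᵥ D j) := by
    intro k; rw [hw k, dot_sum_smul]
  have hdot2 : ∀ j, D j ⬝ᵥ w j = ∑ k, A⁻¹ j k * (D k ⬝ᵥ D j) := by
    intro j; rw [dotProduct_comm, hw j, sum_smul_dot]
  -- first Q piece
  have hQ1 : ∑ k, ∑ j, (B * A⁻¹) k j * (D k ⬝ᵥ D j) = T := by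
    refine Finset.sum_congr rfl fun k _ => ?_
    rw [hdot k, Finset.mul_sum]
    refine Finset.sum_congr rfl fun j _ => ?_
    rw [Matrix.diagonal_mul]
    ring
  -- second Q piece
  have hQ2 : ∑ k, ∑ j, ((A⁻¹)ᵀ * B) k j * (D k ⬝ᵥ D j) = T := by
    rw [Finset.sum_comm]
    refine Finset.sum_congr rfl fun j _ => ?_
    rw [hdot2 j, Finset.mul_sum]
    refine Finset.sum_congr rfl fun k _ => ?_
    rw [Matrix.mul_diagonal, Matrix.transpose_apply]
    ring
  -- third Q piece
  set c : Fin s → ℝ := fun k => ∑ p, b p * A⁻¹ p k with hcdef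
  have hentry : ∀ k j, ((A⁻¹)ᵀ * Matrix.vecMulVec b b * A⁻¹) k j = c k * c j := by
    intro k j
    have h1 : ((A⁻¹)ᵀ * Matrix.vecMulVec b b * A⁻¹) k j
        = ∑ q, ∑ p, A⁻¹ p k * (b p * b q) * A⁻¹ q j := by
      rw [Matrix.mul_apply]
      refine Finset.sum_congr rfl fun q _ => ?_
      rw [Matrix.mul_apply, Finset.sum_mul]
      refine Finset.sum_congr rfl fun p _ => ?_
      rw [Matrix.transpose_apply, Matrix.vecMulVec_apply]
    rw [h1, Finset.sum_comm]
    simp only [hcdef]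
    rw [Finset.sum_mul_sum]
    exact Finset.sum_congr rfl fun p _ => Finset.sum_congr rfl fun q _ => by ring
  have hcS : ∑ k, c k • D k = S := by
    calc ∑ k, c k • D k = ∑ k, ∑ p, (b p * A⁻¹ p k) • D k := by
          refine Finset.sum_congr rfl fun k _ => ?_
          show (∑ p, b p * A⁻¹ p k) • D k = _
          exact Finset.sum_smul
      _ = ∑ p, b p • ∑ k, A⁻¹ p k • D k := by
          rw [Finset.sum_comm]
          refine Finset.sum_congr rfl fun p _ => ?_
          rw [Finset.smul_sum]
          exact Finset.sum_congr rfl fun k _ => by rw [smul_smul]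
      _ = S := by
          rw [hSdef]
          exact Finset.sum_congr rfl fun p _ => by rw [← hw p]
  have hQ3 : ∑ k, ∑ j, ((A⁻¹)ᵀ * Matrix.vecMulVec b b * A⁻¹) k j * (D k ⬝ᵥ D j)
      = S ⬝ᵥ S := by
    rw [← hcS]
    rw [dot_sum_smul]
    refine Finset.sum_congr rfl fun k _ => ?_
    rw [dotProduct_comm, dot_sum_smul, Finset.mul_sum]
    refine Finset.sum_congr rfl fun j _ => ?_
    rw [hentry k j, dotProduct_comm]
    ring
  -- total quadratic form
  have hQtot : ΔU ⬝ᵥ (Q ⊗ₖ (1 : Matrix (Fin n) (Fin n) ℝ)).mulVec ΔU = T + T - S ⬝ᵥ S := by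
    rw [quadKron]
    have hΔU : ∀ k j, ((fun i => ΔU (k,i)) ⬝ᵥ (fun i => ΔU (j,i))) = D k ⬝ᵥ D j :=
      fun k j => rfl
    calc ∑ k, ∑ j, Q k j * ((fun i => ΔU (k,i)) ⬝ᵥ (fun i => ΔU (j,i)))
        = ∑ k, ∑ j, ((B * A⁻¹) k j * (D k ⬝ᵥ D j) + ((A⁻¹)ᵀ * B) k j * (D k ⬝ᵥ D j)
            - ((A⁻¹)ᵀ * Matrix.vecMulVec b b * A⁻¹) k j * (D k ⬝ᵥ D j)) := by
          refine Finset.sum_congr rfl fun k _ => Finset.sum_congr rfl fun j _ => ?_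
          rw [hΔU k j]
          show (B * A⁻¹ + (A⁻¹)ᵀ * B - (A⁻¹)ᵀ * Matrix.vecMulVec b b * A⁻¹) k j
              * (D k ⬝ᵥ D j) = _
          rw [Matrix.sub_apply, Matrix.add_apply]
          ring
      _ = T + T - S ⬝ᵥ S := by
          rw [← hQ3]
          nth_rewrite 2 [← hQ2]
          nth_rewrite 1 [← hQ1]
          simp only [Finset.sum_add_distrib, Finset.sum_sub_distrib]
  -- the step vector
  have hS_step : Δt • ∑ k, b k • L.mulVec (Ustage k) = S := by
    rw [hSdef, Finset.smul_sum]
    exact Finset.sum_congr rfl fun k _ => by rw [hwdef, smul_comm]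
  -- the stage vector split
  have hU : ∀ k, Ustage k = Un + D k := by
    intro k; funext i; simp [hDdef]
  -- RHS second term
  have hR2 : Δt * ∑ k, b k * (Ustage k ⬝ᵥ ((1 / 2 : ℝ) • (L + Lᵀ)).mulVec (Ustage k))
      = Un ⬝ᵥ S + T := by
    calc Δt * ∑ k, b k * (Ustage k ⬝ᵥ ((1 / 2 : ℝ) • (L + Lᵀ)).mulVec (Ustage k))
        = ∑ k, b k * (Ustage k ⬝ᵥ w k) := by
          rw [Finset.mul_sum]
          refine Finset.sum_congr rfl fun k _ => ?_
          rw [symmDot, hwdef, dotProduct_smul, smul_eq_mul]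
          ring
      _ = ∑ k, (b k * (Un ⬝ᵥ w k) + b k * (D k ⬝ᵥ w k)) := by
          refine Finset.sum_congr rfl fun k _ => ?_
          rw [hU k, add_dotProduct]
          ring
      _ = Un ⬝ᵥ S + T := by
          rw [Finset.sum_add_distrib, hTdef, hSdef, dot_sum_smul]
  -- LHS
  have hL : (1 / 2 : ℝ) * (Un1 ⬝ᵥ Un1) - (1 / 2 : ℝ) * (Un ⬝ᵥ Un)
      = Un ⬝ᵥ S + (1 / 2 : ℝ) * (S ⬝ᵥ S) := by
    rw [hstep, hS_step]
    rw [add_dotProduct, dotProduct_add, dotProduct_add, dotProduct_comm S Un]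
    ring
  rw [hL, hQtot, hR2]
  ring
end
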